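/- arXiv:1306.3631 — 2 statements merged into one kernel-verified Lean document; each statement's English description precedes it below -/
import Mathlib

section
/- Let T > 0, L_0, M_0 ≥ 0, and let F : [0,T] × ℝ × ℝ^d → ℝ satisfy |F(t,y,z) − F(t,y',z)| ≤ L_0 |y − y'| for all t ∈ [0,T], y, y' ∈ ℝ, z ∈ ℝ^d, and |F(t,0,0)| ≤ M_0 for all t. Let h : [0,T] → ℝ satisfy |h(t)| ≤ M_0 for all t. Set λ := L_0 + 1 and C := −2 e^{(L_0+1)T} (λ + 1)(M_0 + 1), and define F'(t,y,z) := e^{λt} F(t, e^{−λt} y − C e^{−λt} t, e^{−λt} z) − C(1 − λ t) − λ y and h'(t) := e^{λt} h(t) + C t. Then: (i) for every δ > 0 and all (t,y,z), F'(t, y + δ, z) + δ ≤ F'(t, y, z); and (ii) for every t ∈ [0,T], F'(t, h'(t), 0) ≥ 0. -/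
noncomputable section

/-- Remark 4.6 of the paper: with `λ = L₀ + 1`, `μ = 0` and
`C = −2 e^{(L₀+1)T} (λ+1)(M₀+1)`, the transformed generator
`F'(t,y,z) = e^{λt} F(t, e^{−λt}y − C e^{−λt} t, e^{−λt} z) − C(1 − λt) − λ y`
and transformed obstacle `h'(t) = e^{λt} h(t) + C t` satisfy the conditions (4.6):
strict monotonicity `F'(t, y+δ, z) + δ ≤ F'(t, y, z)` and `F'(t, h'(t), 0) ≥ 0`. -/
theorem transformed_generator_monotone_and_nonneg (T : ℝ) (hT : 0 < T) (d : ℕ)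
    (L₀ M₀ : ℝ) (hL₀ : 0 ≤ L₀) (hM₀ : 0 ≤ M₀)
    (F : ℝ → ℝ → EuclideanSpace ℝ (Fin d) → ℝ) (h : ℝ → ℝ)
    (hFLip : ∀ t ∈ Set.Icc (0:ℝ) T, ∀ y y' : ℝ, ∀ z : EuclideanSpace ℝ (Fin d),
      |F t y z - F t y' z| ≤ L₀ * |y - y'|)
    (hFbd : ∀ t ∈ Set.Icc (0:ℝ) T, |F t 0 0| ≤ M₀)
    (hbd : ∀ t ∈ Set.Icc (0:ℝ) T, |h t| ≤ M₀)
    (lam C : ℝ) (hlam : lam = L₀ + 1)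
    (hC : C = -2 * Real.exp ((L₀ + 1) * T) * (lam + 1) * (M₀ + 1))
    (F' : ℝ → ℝ → EuclideanSpace ℝ (Fin d) → ℝ)
    (hF' : ∀ t y z, F' t y z =
      Real.exp (lam * t) *
          F t (Real.exp (-lam * t) * y - C * Real.exp (-lam * t) * t)
            (Real.exp (-lam * t) • z)
        - C * (1 - lam * t) - lam * y)
    (h' : ℝ → ℝ) (hh' : ∀ t, h' t = Real.exp (lam * t) * h t + C * t) :
    (∀ δ : ℝ, 0 < δ → ∀ t ∈ Set.Icc (0:ℝ) T, ∀ y : ℝ,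
        ∀ z : EuclideanSpace ℝ (Fin d), F' t (y + δ) z + δ ≤ F' t y z) ∧
      ∀ t ∈ Set.Icc (0:ℝ) T, 0 ≤ F' t (h' t) 0 := by
  have hlampos : 0 < lam := by rw [hlam]; linarith
  constructor
  · intro δ hδ t ht y z
    rw [hF' t (y + δ) z, hF' t y z]
    set E := Real.exp (lam * t) with hE
    set e := Real.exp (-lam * t) with he
    have hEpos : 0 < E := Real.exp_pos _
    have hepos : 0 < e := Real.exp_pos _
    have hmul : E * e = 1 := by
      rw [hE, he, ← Real.exp_add]
      ring_nf
      exact Real.exp_zero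
    have hlip := hFLip t ht (e * (y + δ) - C * e * t) (e * y - C * e * t) (e • z)
    have hdiff : (e * (y + δ) - C * e * t) - (e * y - C * e * t) = e * δ := by ring
    rw [hdiff, abs_of_nonneg (by positivity : (0:ℝ) ≤ e * δ)] at hlip
    have h1 : F t (e * (y + δ) - C * e * t) (e • z) - F t (e * y - C * e * t) (e • z)
        ≤ L₀ * (e * δ) := (le_abs_self _).trans hlip
    have h2 := mul_le_mul_of_nonneg_left h1 hEpos.le
    have h3 : E * (L₀ * (e * δ)) = L₀ * δ := by
      rw [show E * (L₀ * (e * δ)) = (E * e) * (L₀ * δ) by ring, hmul, one_mul]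
    rw [h3] at h2
    nlinarith [h2, hlampos]
  · intro t ht
    rw [hF', hh']
    have hmul : Real.exp (-lam * t) * Real.exp (lam * t) = 1 := by
      rw [← Real.exp_add]; ring_nf; exact Real.exp_zero
    have harg : Real.exp (-lam * t) * (Real.exp (lam * t) * h t + C * t)
        - C * Real.exp (-lam * t) * t = h t := by
      rw [show Real.exp (-lam * t) * (Real.exp (lam * t) * h t + C * t)
          - C * Real.exp (-lam * t) * t
          = (Real.exp (-lam * t) * Real.exp (lam * t)) * h t +
            (Real.exp (-lam * t) * (C * t) - C * Real.exp (-lam * t) * t) by ring, hmul]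
      ring
    rw [harg, smul_zero]
    set E := Real.exp (lam * t) with hE
    have hEpos : 0 < E := Real.exp_pos _
    have hET : E ≤ Real.exp ((L₀ + 1) * T) := by
      rw [hE, ← hlam]
      exact Real.exp_le_exp.mpr (mul_le_mul_of_nonneg_left ht.2 hlampos.le)
    have hETpos : 0 < Real.exp ((L₀ + 1) * T) := Real.exp_pos _
    have hF0 := hFbd t ht
    have hht := hbd t ht
    have hlip := hFLip t ht (h t) 0 (0 : EuclideanSpace ℝ (Fin d))
    rw [sub_zero] at hlip
    have hA : -(lam * M₀) ≤ F t (h t) 0 := by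
      have h1 : F t 0 0 - F t (h t) 0 ≤ L₀ * |h t| := by
        have := (abs_sub_comm (F t (h t) 0) (F t 0 0)) ▸ hlip
        exact (le_abs_self _).trans this
      have h2 : -M₀ ≤ F t 0 0 := (abs_le.mp hF0).1
      have h3 : |h t| ≤ M₀ := hht
      have h4 : L₀ * |h t| ≤ L₀ * M₀ := mul_le_mul_of_nonneg_left h3 hL₀
      rw [hlam]; nlinarith
    have hh1 : h t ≤ M₀ := (abs_le.mp hht).2
    have hh2 : -M₀ ≤ h t := (abs_le.mp hht).1
    -- goal: 0 ≤ E * F t (h t) 0 - C * (1 - lam * t) - lam * (E * h t + C * t)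
    nlinarith [mul_le_mul_of_nonneg_left hA hEpos.le,
      mul_le_mul_of_nonneg_left hh1 (mul_pos hlampos hEpos).le,
      mul_le_mul_of_nonneg_left hET (mul_nonneg hlampos.le hM₀),
      mul_pos hlampos hETpos, mul_nonneg hM₀ hETpos.le, hC, hEpos, hETpos]

end
end

section
/- Let T, α, h, δ > 0 with 4δ ≤ h, let n ≥ 1, and let 0 = s_0 < s_1 < ⋯ < s_n = T and 0 = s'_0 < s'_1 < ⋯ < s'_n = T be two partitions of [0,T] with |s_i − s'_i| ≤ δ for all i and s_{i+1} − s_i ≥ h for all i < n. Let y_0, …, y_n ∈ ℝ^d satisfy |y_{i+1} − y_i| ≤ α for all i < n, and let f, f' : [0,T] → ℝ^d be the piecewise linear interpolations determined by f(s_i) = y_i and f'(s'_i) = y_i for all i. Then sup_{u ∈ [0,T]} |f(u) − f'(u)| ≤ 8 α δ / h. -/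
/-!
Locate `u` in a piece `[s i, s (i+1)]` of the first grid. Since the grids are `δ`-close and
`δ ≤ h/4`, the second grid puts `u` in the piece with the same index or a neighbouring one.
With the same index, both values lie on the segment `[y i, y (i+1)]` at parameters differing by
at most `6δ/h`. With a neighbouring index, `u` is within `δ` of the shared node in both grids, and
since every piece has length at least `h/2`, both values are within `2δ/h · α` of that node.
-/

open AffineMap Set

theorem exists_lt_mem_Icc_succ {s : ℕ → ℝ} {u : ℝ} :
    ∀ {n : ℕ}, 1 ≤ n → u ∈ Icc (s 0) (s n) → ∃ i < n, u ∈ Icc (s i) (s (i + 1))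
  | 0, hn, _ => absurd hn (by norm_num)
  | 1, _, hu => ⟨0, one_pos, hu⟩
  | m + 2, _, ⟨hu0, hun⟩ => by
    rcases le_or_gt u (s (m + 1)) with hle | hlt
    · obtain ⟨i, hi, hui⟩ := exists_lt_mem_Icc_succ (by omega) ⟨hu0, hle⟩
      exact ⟨i, by omega, hui⟩
    · exact ⟨m + 1, by omega, hlt.le, hun⟩

theorem div_le_two_mul_div_of_le {t δ h D : ℝ} (ht0 : 0 ≤ t) (htδ : t ≤ δ) (hh : 0 < h)
    (hD : h ≤ 2 * D) : t / D ≤ 2 * δ / h := by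
  rw [div_le_div_iff₀ (by linarith) hh]
  nlinarith

/-- Writing `a / D - b / D' = ((a / D) (D' - D) + (a - b)) / D'` with `|a / D| ≤ 1`. -/
theorem abs_div_sub_div_le_six_mul_div {a b D D' δ h : ℝ} (ha : 0 ≤ a) (haD : a ≤ D)
    (hab : |a - b| ≤ δ) (hDD' : |D - D'| ≤ 2 * δ) (hh : 0 < h) (hD : h ≤ D) (hδh : 4 * δ ≤ h) :
    |a / D - b / D'| ≤ 6 * δ / h := by
  have hD0 : 0 < D := hh.trans_le hD
  have hD' : h ≤ 2 * D' := by linarith [(abs_le.mp hDD').2]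
  have hD'0 : 0 < D' := by linarith
  have hquot : |a / D| ≤ 1 := by
    rw [abs_of_nonneg (by positivity)]
    exact div_le_one_of_le₀ haD hD0.le
  calc |a / D - b / D'| = |a / D * (D' - D) + (a - b)| / D' := by
        rw [← abs_of_pos hD'0, ← abs_div, abs_of_pos hD'0]
        congr 1
        field_simp
        ring
    _ ≤ (|D - D'| + |a - b|) / D' := by
        gcongr
        calc |a / D * (D' - D) + (a - b)| ≤ |a / D| * |D' - D| + |a - b| := by
              rw [← abs_mul]; exact abs_add_le _ _
          _ ≤ |D - D'| + |a - b| := by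
              rw [abs_sub_comm D']
              nlinarith [abs_nonneg (D - D')]
    _ ≤ 2 * (3 * δ) / h :=
        div_le_two_mul_div_of_le (by positivity) (by linarith) hh hD'
    _ = 6 * δ / h := by ring

section lineMap

variable {V P : Type*} [SeminormedAddCommGroup V] [NormedSpace ℝ V] [PseudoMetricSpace P]
  [NormedAddTorsor V P] {p q r : P} {a b a' b' u δ h α : ℝ}

theorem dist_lineMap_div_left_le (hu : |u - a| ≤ δ) (hh : 0 < h) (hab : h ≤ 2 * |b - a|)
    (hpq : dist p q ≤ α) : dist (lineMap p q ((u - a) / (b - a))) p ≤ 2 * δ / h * α := by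
  rw [dist_lineMap_left, Real.norm_eq_abs, abs_div]
  have hδ : 0 ≤ δ := (abs_nonneg _).trans hu
  exact mul_le_mul (div_le_two_mul_div_of_le (abs_nonneg _) hu hh hab) hpq dist_nonneg
    (by positivity)

theorem dist_lineMap_div_right_le (hu : |u - b| ≤ δ) (hh : 0 < h) (hab : h ≤ 2 * |b - a|)
    (hpq : dist p q ≤ α) : dist (lineMap p q ((u - a) / (b - a))) q ≤ 2 * δ / h * α := by
  have hba : b - a ≠ 0 := fun h0 => by simp [h0] at hab; linarith
  have hflip : (u - a) / (b - a) = 1 - (u - b) / (a - b) := by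
    field_simp [sub_ne_zero.mpr (sub_ne_zero.mp hba).symm]
    ring
  rw [hflip, lineMap_apply_one_sub]
  rw [abs_sub_comm] at hab
  exact dist_lineMap_div_left_le hu hh hab (dist_comm p q ▸ hpq)

/-- Both points are within `2δ/h · α` of the shared node `q`, reached at times `b` and `a'`. -/
theorem dist_lineMap_div_le_of_near_node (hu : u ∈ uIcc b a') (hba' : |b - a'| ≤ δ)
    (hh : 0 < h) (hab : h ≤ 2 * |b - a|) (ha'b' : h ≤ 2 * |b' - a'|)
    (hpq : dist p q ≤ α) (hqr : dist q r ≤ α) :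
    dist (lineMap p q ((u - a) / (b - a))) (lineMap q r ((u - a') / (b' - a')))
      ≤ 4 * δ / h * α := by
  rw [abs_sub_comm] at hba'
  have hub : |u - b| ≤ δ := (abs_sub_left_of_mem_uIcc hu).trans hba'
  have hua' : |u - a'| ≤ δ := abs_sub_comm a' u ▸ (abs_sub_right_of_mem_uIcc hu).trans hba'
  calc _ ≤ dist (lineMap p q ((u - a) / (b - a))) q
          + dist (lineMap q r ((u - a') / (b' - a'))) q := dist_triangle_right _ _ _
    _ ≤ 2 * δ / h * α + 2 * δ / h * α :=
        add_le_add (dist_lineMap_div_right_le hub hh hab hpq)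
          (dist_lineMap_div_left_le hua' hh ha'b' hqr)
    _ = 4 * δ / h * α := by ring

theorem dist_lineMap_div_lineMap_div_le (hua : 0 ≤ u - a) (hub : u ≤ b)
    (haa' : |a - a'| ≤ δ) (hbb' : |b - b'| ≤ δ) (hh : 0 < h) (hab : h ≤ b - a)
    (hδh : 4 * δ ≤ h) (hpq : dist p q ≤ α) :
    dist (lineMap p q ((u - a) / (b - a))) (lineMap p q ((u - a') / (b' - a')))
      ≤ 6 * δ / h * α := by
  rw [dist_lineMap_lineMap, Real.dist_eq]
  have hδ : 0 ≤ δ := (abs_nonneg _).trans haa'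
  refine mul_le_mul (abs_div_sub_div_le_six_mul_div hua (by linarith) ?_ ?_ hh hab hδh) hpq
    dist_nonneg (by positivity)
  · rw [show u - a - (u - a') = -(a - a') by ring, abs_neg]; exact haa'
  · rw [show b - a - (b' - a') = (b - b') - (a - a') by ring]
    linarith [abs_sub (b - b') (a - a')]

noncomputable def interpPiece (s : ℕ → ℝ) (y : ℕ → P) (i : ℕ) (u : ℝ) : P :=
  lineMap (y i) (y (i + 1)) ((u - s i) / (s (i + 1) - s i))

theorem exists_dist_interpPiece_le {n i : ℕ} {s s' : ℕ → ℝ} {y : ℕ → P} (hi : i < n)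
    (hu : u ∈ Icc (s i) (s (i + 1))) (hu' : u ∈ Icc (s' 0) (s' n))
    (hclose : ∀ i ≤ n, |s i - s' i| ≤ δ) (hgap : ∀ i < n, h ≤ s (i + 1) - s i) (hh : 0 < h)
    (hδh : 4 * δ ≤ h) (hstep : ∀ i < n, dist (y i) (y (i + 1)) ≤ α) :
    ∃ j < n, u ∈ Icc (s' j) (s' (j + 1)) ∧
      dist (interpPiece s y i u) (interpPiece s' y j u) ≤ 6 * δ / h * α := by
  have hmesh : ∀ i < n, h ≤ 2 * |s (i + 1) - s i| := fun i hi => by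
    linarith [hgap i hi, le_abs_self (s (i + 1) - s i)]
  have hmesh' : ∀ i < n, h ≤ 2 * |s' (i + 1) - s' i| := fun i hi => by
    linarith [abs_le.mp (hclose i hi.le), abs_le.mp (hclose (i + 1) hi), hgap i hi,
      le_abs_self (s' (i + 1) - s' i)]
  have h46 : 4 * δ / h * α ≤ 6 * δ / h * α := by
    have hδ : 0 ≤ δ := (abs_nonneg _).trans (hclose 0 n.zero_le)
    have hα : 0 ≤ α := dist_nonneg.trans (hstep i hi)
    gcongr; norm_num
  obtain ⟨hsi, hsi₁⟩ := hu
  rcases lt_or_ge u (s' i) with hlt | hge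
  · obtain ⟨j, rfl⟩ : ∃ j, i = j + 1 :=
      Nat.exists_eq_succ_of_ne_zero (by rintro rfl; linarith [hu'.1])
    refine ⟨j, by omega, ⟨?_, hlt.le⟩, ?_⟩
    · linarith [hgap j (by omega), abs_le.mp (hclose j (by omega))]
    rw [dist_comm]
    exact (dist_lineMap_div_le_of_near_node (mem_uIcc_of_ge hsi hlt.le)
      (abs_sub_comm (s (j + 1)) _ ▸ hclose (j + 1) hi.le) hh
      (hmesh' j (by omega)) (hmesh (j + 1) hi) (hstep j (by omega)) (hstep (j + 1) hi)).trans h46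
  rcases le_or_gt u (s' (i + 1)) with hle | hgt
  · exact ⟨i, hi, ⟨hge, hle⟩, dist_lineMap_div_lineMap_div_le (by linarith) hsi₁ (hclose i hi.le)
      (hclose (i + 1) hi) hh (hgap i hi) hδh (hstep i hi)⟩
  have hi₁ : i + 1 < n := by
    by_contra! hni
    obtain rfl : n = i + 1 := by omega
    linarith [hu'.2]
  refine ⟨i + 1, hi₁, ⟨hgt.le, ?_⟩, ?_⟩
  · linarith [hgap (i + 1) hi₁, abs_le.mp (hclose (i + 2) hi₁)]
  exact (dist_lineMap_div_le_of_near_node (mem_uIcc_of_ge hgt.le hsi₁) (hclose (i + 1) hi) hh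
    (hmesh i hi) (hmesh' (i + 1) hi₁) (hstep i hi) (hstep (i + 1) hi₁)).trans h46

end lineMap

theorem piecewise_linear_interpolation_stability_general
    (T α h δ : ℝ) (hh : 0 < h)
    (hδh : 4 * δ ≤ h) (d : ℕ) (n : ℕ) (hn : 1 ≤ n)
    (s s' : ℕ → ℝ) (y : ℕ → EuclideanSpace ℝ (Fin d))
    (hs0 : s 0 = 0) (hs'0 : s' 0 = 0) (hsn : s n = T) (hs'n : s' n = T)
    (hclose : ∀ i ≤ n, |s i - s' i| ≤ δ)
    (hgap : ∀ i < n, h ≤ s (i + 1) - s i)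
    (hy : ∀ i < n, ‖y (i + 1) - y i‖ ≤ α)
    (f f' : ℝ → EuclideanSpace ℝ (Fin d))
    (hf : ∀ i < n, ∀ u ∈ Set.Icc (s i) (s (i + 1)),
      f u = y i + ((u - s i) / (s (i + 1) - s i)) • (y (i + 1) - y i))
    (hf' : ∀ i < n, ∀ u ∈ Set.Icc (s' i) (s' (i + 1)),
      f' u = y i + ((u - s' i) / (s' (i + 1) - s' i)) • (y (i + 1) - y i)) :
    ∀ u ∈ Set.Icc (0:ℝ) T, ‖f u - f' u‖ ≤ 8 * α * δ / h := by
  rintro u ⟨hu0, huT⟩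
  have hpiece : ∀ (t : ℕ → ℝ) (i : ℕ) (v : ℝ),
      y i + ((v - t i) / (t (i + 1) - t i)) • (y (i + 1) - y i) = interpPiece t y i v :=
    fun t i v => by rw [interpPiece, lineMap_apply_module', add_comm]
  simp only [hpiece] at hf hf'
  have hstep : ∀ i < n, dist (y i) (y (i + 1)) ≤ α := fun i hi => by
    rw [dist_comm, dist_eq_norm]; exact hy i hi
  have hα : 0 ≤ α := dist_nonneg.trans (hstep 0 hn)
  have hδ : 0 ≤ δ := (abs_nonneg _).trans (hclose 0 n.zero_le)
  obtain ⟨i, hi, hui⟩ :=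
    exists_lt_mem_Icc_succ hn (hs0 ▸ hsn ▸ ⟨hu0, huT⟩ : u ∈ Icc (s 0) (s n))
  obtain ⟨j, hj, huj, hdist⟩ := exists_dist_interpPiece_le hi hui
    (hs'0 ▸ hs'n ▸ ⟨hu0, huT⟩) hclose hgap hh hδh hstep
  rw [← dist_eq_norm, hf i hi u hui, hf' j hj u huj]
  exact hdist.trans (by field_simp; nlinarith)

/-- Deterministic stability estimate for piecewise linear interpolations (Step 1 of
Appendix B): if `f` and `f'` are the piecewise linear interpolations through the same
spatial nodes `y_0, …, y_n` (with consecutive increments of norm at most `α`) over two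
`δ`-close time grids `0 = s_0 < ⋯ < s_n = T` and `0 = s'_0 < ⋯ < s'_n = T`, the first of
which has mesh gaps at least `h ≥ 4δ`, then `sup_{u ∈ [0,T]} ‖f(u) − f'(u)‖ ≤ 8αδ/h`. -/
theorem piecewise_linear_interpolation_stability
    (T α h δ : ℝ) (hT : 0 < T) (hα : 0 < α) (hh : 0 < h) (hδ : 0 < δ)
    (hδh : 4 * δ ≤ h) (d : ℕ) (n : ℕ) (hn : 1 ≤ n)
    (s s' : ℕ → ℝ) (y : ℕ → EuclideanSpace ℝ (Fin d))
    (hs0 : s 0 = 0) (hs'0 : s' 0 = 0) (hsn : s n = T) (hs'n : s' n = T)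
    (hmono : ∀ i < n, s i < s (i + 1)) (hmono' : ∀ i < n, s' i < s' (i + 1))
    (hclose : ∀ i ≤ n, |s i - s' i| ≤ δ)
    (hgap : ∀ i < n, h ≤ s (i + 1) - s i)
    (hy : ∀ i < n, ‖y (i + 1) - y i‖ ≤ α)
    (f f' : ℝ → EuclideanSpace ℝ (Fin d))
    (hf : ∀ i < n, ∀ u ∈ Set.Icc (s i) (s (i + 1)),
      f u = y i + ((u - s i) / (s (i + 1) - s i)) • (y (i + 1) - y i))
    (hf' : ∀ i < n, ∀ u ∈ Set.Icc (s' i) (s' (i + 1)),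
      f' u = y i + ((u - s' i) / (s' (i + 1) - s' i)) • (y (i + 1) - y i)) :
    ∀ u ∈ Set.Icc (0:ℝ) T, ‖f u - f' u‖ ≤ 8 * α * δ / h :=
  piecewise_linear_interpolation_stability_general T α h δ hh hδh d n hn s s' y hs0 hs'0 hsn hs'n
    hclose hgap hy f f' hf hf'
end
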